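/- The nested cube-root radical built from powers of 4 evaluates to 2^{3/2}: the doubly-indexed truncations F m 1 converge to 4^{3/4} = 2^{3/2} as m → ∞; that is, ∛(4∛(4²∛(4³∛(...)))) = 2^{3/2}. -/

import Mathlib

noncomputable def F : ℕ → ℕ → ℝ
  | 0, _ => 1
  | m + 1, j => ((4 : ℝ) ^ j * F m (j + 1)) ^ (1 / 3 : ℝ)

/-!
Every truncation is a power of 4, `F m j = 4 ^ e m j`, where the exponents obey the affine
recursion `e (m+1) j = (j + e m (j+1)) / 3` with `e 0 j = 0`. Its fixed point is
`c j = j / 2 + 1 / 4`, and the error `c j - e m j` is divided by 3 at each step while `j` only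
grows by one, so `e m j = c j - c (j + m) / 3 ^ m → c j`.
-/

open Filter Topology

noncomputable def nestedExponent : ℕ → ℕ → ℝ
  | 0, _ => 0
  | m + 1, j => ((j : ℝ) + nestedExponent m (j + 1)) / 3

theorem F_eq_four_rpow_nestedExponent (m j : ℕ) : F m j = (4 : ℝ) ^ nestedExponent m j := by
  induction m generalizing j with
  | zero => simp [F, nestedExponent]
  | succ m ih =>
    rw [F, nestedExponent, ih, ← Real.rpow_natCast, ← Real.rpow_add (by norm_num),
      ← Real.rpow_mul (by norm_num), mul_one_div]

theorem nestedExponent_eq (m j : ℕ) :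
    nestedExponent m j = ((j : ℝ) / 2 + 1 / 4) - ((j : ℝ) / 2 + 1 / 4 + m / 2) * (1 / 3) ^ m := by
  induction m generalizing j with
  | zero => simp [nestedExponent]
  | succ m ih =>
    rw [nestedExponent, ih]
    push_cast
    ring

theorem tendsto_affine_mul_pow_atTop_nhds_zero (a b : ℝ) {r : ℝ} (hr₀ : 0 ≤ r) (hr₁ : r < 1) :
    Tendsto (fun n : ℕ ↦ (a + b * n) * r ^ n) atTop (𝓝 0) := by
  have hconst := (tendsto_pow_atTop_nhds_zero_of_lt_one hr₀ hr₁).const_mul a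
  have hlin := (tendsto_self_mul_const_pow_of_lt_one hr₀ hr₁).const_mul b
  simpa only [mul_zero, add_zero, add_mul, mul_assoc] using hconst.add hlin

theorem tendsto_nestedExponent (j : ℕ) :
    Tendsto (fun m ↦ nestedExponent m j) atTop (𝓝 ((j : ℝ) / 2 + 1 / 4)) := by
  have herr := tendsto_affine_mul_pow_atTop_nhds_zero ((j : ℝ) / 2 + 1 / 4) (1 / 2)
    (by norm_num : (0 : ℝ) ≤ 1 / 3) (by norm_num)
  simpa only [nestedExponent_eq, sub_zero, one_div_mul_eq_div] using herr.const_sub _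

theorem tendsto_F (j : ℕ) :
    Tendsto (fun m ↦ F m j) atTop (𝓝 ((4 : ℝ) ^ ((j : ℝ) / 2 + 1 / 4))) := by
  simpa only [F_eq_four_rpow_nestedExponent] using
    tendsto_const_nhds.rpow (tendsto_nestedExponent j) (Or.inl (by norm_num))

theorem four_rpow_eq_two_rpow_two_mul (x : ℝ) : (4 : ℝ) ^ x = (2 : ℝ) ^ (2 * x) := by
  rw [Real.rpow_mul (by norm_num)]
  norm_num

theorem nested_cbrt_powers_of_four :
    Filter.Tendsto (fun m => F m 1) Filter.atTop (nhds ((4 : ℝ) ^ ((3 / 4) : ℝ))) ∧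
      (4 : ℝ) ^ ((3 / 4) : ℝ) = (2 : ℝ) ^ ((3 / 2) : ℝ) := by
  refine ⟨?_, by rw [four_rpow_eq_two_rpow_two_mul]; norm_num⟩
  convert tendsto_F 1 using 3
  norm_num
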